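/- Let φ : A → B be an epimorphism in the category of unital associative ℂ-algebras (i.e., for every unital ℂ-algebra C and all unital ℂ-algebra homomorphisms g, h : B → C, g ∘ φ = h ∘ φ implies g = h). Let M be a B-bimodule and let d₁, d₂ : B → M be ℂ-linear derivations such that d₁ ∘ φ = d₂ ∘ φ. Then d₁ = d₂. -/

import Mathlib

open TrivSqZeroExt

/-- If `φ : A → B` is an epimorphism of unital `ℂ`-algebras, `M` is a `B`-bimodule,
and `d₁, d₂ : B → M` are `ℂ`-linear derivations with `d₁ ∘ φ = d₂ ∘ φ`, then `d₁ = d₂`.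
(The right action of `b` on `M` is written `op b • ·`.) -/
theorem stmt10.{u} (A B M : Type u) [Ring A] [Algebra ℂ A] [Ring B] [Algebra ℂ B]
    [AddCommGroup M] [Module ℂ M]
    [Module B M] [Module Bᵐᵒᵖ M] [SMulCommClass B Bᵐᵒᵖ M]
    [IsScalarTower ℂ B M] [IsScalarTower ℂ Bᵐᵒᵖ M]
    (φ : A →ₐ[ℂ] B)
    (hepi : ∀ (C : Type u) [Ring C] [Algebra ℂ C] (g h : B →ₐ[ℂ] C),
      g.comp φ = h.comp φ → g = h)
    (d₁ d₂ : B →ₗ[ℂ] M)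
    (hd₁ : ∀ a b : B, d₁ (a * b) = a • d₁ b + MulOpposite.op b • d₁ a)
    (hd₂ : ∀ a b : B, d₂ (a * b) = a • d₂ b + MulOpposite.op b • d₂ a)
    (h : ∀ a : A, d₁ (φ a) = d₂ (φ a)) :
    d₁ = d₂ := by
  set d : B →ₗ[ℂ] M := d₁ - d₂ with hdset
  have hder : ∀ a b : B, d (a * b) = a • d b + MulOpposite.op b • d a := by
    intro a b
    simp only [hdset, LinearMap.sub_apply, hd₁, hd₂, smul_sub]
    abel
  have hone : d 1 = 0 := by
    have h1 := hder 1 1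
    simp only [mul_one, one_smul, MulOpposite.op_one] at h1
    exact left_eq_add.mp h1
  let g : B →ₐ[ℂ] TrivSqZeroExt B M :=
  { toFun := fun b => (b, d b)
    map_one' := by ext <;> simp [fst_one, snd_one, hone]
    map_mul' := fun a b => by
      ext
      · simp [fst_mul]; rfl
      · simp [snd_mul, hder a b]; rfl
    map_zero' := by ext <;> simp
    map_add' := fun a b => by ext <;> simp <;> rfl
    commutes' := fun r => by
      rw [algebraMap_eq_inl']
      refine TrivSqZeroExt.ext rfl ?_
      show d ((algebraMap ℂ B) r) = 0
      rw [Algebra.algebraMap_eq_smul_one, map_smul, hone, smul_zero] }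
  have hg : g = inlAlgHom ℂ B M := by
    apply hepi
    refine AlgHom.ext fun a => ?_
    have ha : d (φ a) = 0 := by simp [hdset, h a]
    refine TrivSqZeroExt.ext rfl ?_
    exact ha
  have hd0 : ∀ b : B, d b = 0 := by
    intro b
    have := congrArg (fun f => snd (f b)) hg
    exact this
  ext b
  have := hd0 b
  simp only [hdset, LinearMap.sub_apply, sub_eq_zero] at this
  exact this
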